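/- arXiv:2605.26506 — 2 statements merged into one kernel-verified Lean document; each statement's English description precedes it below -/
import Mathlib

section
/- For every Weyl tensor W on (ℝ⁴, η) and every future-directed timelike vector X ∈ ℝ⁴ (i.e. η(X,X) = Σ_{μ,ν} η_{μν} X^μ X^ν < 0 and X⁰ > 0), the Bel-Robinson tensor Q of W satisfies Q(X,X,X,X) := Σ_{α,β,γ,δ} Q_{αβγδ} X^α X^β X^γ X^δ ≥ 0. -/
/-- The Minkowski metric `η` on `ℝ⁴` (and its inverse, which has the same components):
`η_{00} = -1`, `η_{11} = η_{22} = η_{33} = 1`, off-diagonal components zero. -/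
noncomputable def eta (μ ν : Fin 4) : ℝ :=
  if μ = ν then (if μ = 0 then -1 else 1) else 0

/-- The Levi-Civita symbol on four indices, totally antisymmetric with `ε_{0123} = 1`. -/
noncomputable def eps4 (i j k l : Fin 4) : ℝ :=
  ((((j : ℕ) : ℝ) - ((i : ℕ) : ℝ)) * (((k : ℕ) : ℝ) - ((i : ℕ) : ℝ)) *
    (((l : ℕ) : ℝ) - ((i : ℕ) : ℝ)) * (((k : ℕ) : ℝ) - ((j : ℕ) : ℝ)) *
    (((l : ℕ) : ℝ) - ((j : ℕ) : ℝ)) * (((l : ℕ) : ℝ) - ((k : ℕ) : ℝ))) / 12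

/-- A Weyl tensor on `(ℝ⁴, η)`: antisymmetric in the first and last pairs of indices,
symmetric under exchange of the pairs, satisfying the first Bianchi identity, and
trace-free. -/
def IsWeylTensor (W : Fin 4 → Fin 4 → Fin 4 → Fin 4 → ℝ) : Prop :=
  (∀ α β γ δ, W α β γ δ = -W β α γ δ) ∧
  (∀ α β γ δ, W α β γ δ = -W α β δ γ) ∧
  (∀ α β γ δ, W α β γ δ = W γ δ α β) ∧
  (∀ α β γ δ, W α β γ δ + W α γ δ β + W α δ β γ = 0) ∧
  (∀ α β, ∑ μ, ∑ ν, eta μ ν * W μ α ν β = 0)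

/-- The Hodge dual `(*W)_{αβγδ} = (1/2) Σ η^{ρμ} η^{σν} ε_{αβρσ} W_{μνγδ}`. -/
noncomputable def hodge (W : Fin 4 → Fin 4 → Fin 4 → Fin 4 → ℝ)
    (α β γ δ : Fin 4) : ℝ :=
  (1 / 2) * ∑ μ, ∑ ν, ∑ ρ, ∑ σ, eta ρ μ * eta σ ν * eps4 α β ρ σ * W μ ν γ δ

/-- The Bel-Robinson tensor
`Q_{αβγδ} = Σ η^{μρ} η^{νσ} (W_{αμβν} W_{γρδσ} + (*W)_{αμβν} (*W)_{γρδσ})`. -/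
noncomputable def belRobinson (W : Fin 4 → Fin 4 → Fin 4 → Fin 4 → ℝ)
    (α β γ δ : Fin 4) : ℝ :=
  ∑ μ, ∑ ν, ∑ ρ, ∑ σ, eta μ ρ * eta ν σ *
    (W α μ β ν * W γ ρ δ σ + hodge W α μ β ν * hodge W γ ρ δ σ)


/-!
Relative to the observer `X`, `Q(X,X,X,X) = ⟨E, E⟩ + ⟨B, B⟩`, where `E_{μν} = W_{αμβν} X^α X^β`
and `B`, the same contraction of `*W`, are the electric and magnetic parts of `W`, and
`⟨T, T⟩ = η^{μρ} η^{νσ} T_{μν} T_{ρσ}`. The pair antisymmetries of `W` and `*W` make `X`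
annihilate `E` and `B` on both sides. For such `T`, `η` may be replaced in `⟨T, T⟩` by the
projector `h = η + X ⊗ X / (-η(X, X))` onto the rest space of `X`. By the reverse Cauchy-Schwarz
inequality for the timelike `X`, `h` is positive semidefinite, hence so is `h ⊗ h`, and
`⟨T, T⟩ = vec T ⬝ (h ⊗ h) vec T ≥ 0`.
-/

open Matrix Finset

/-- Aczél's inequality, the reverse Cauchy-Schwarz inequality for a Lorentzian form. -/
theorem Finset.sub_sum_sq_mul_sub_sum_sq_le {ι : Type*} (s : Finset ι) (a b : ℝ) (u v : ι → ℝ)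
    (hu : ∑ i ∈ s, u i ^ 2 < a ^ 2) :
    (a ^ 2 - ∑ i ∈ s, u i ^ 2) * (b ^ 2 - ∑ i ∈ s, v i ^ 2)
      ≤ (a * b + ∑ i ∈ s, u i * v i) ^ 2 := by
  have ha : a ≠ 0 := by
    rintro rfl
    exact (sum_nonneg fun i _ => sq_nonneg (u i)).not_gt (by simpa using hu)
  set D := a ^ 2 - ∑ i ∈ s, u i ^ 2
  set E := a * b + ∑ i ∈ s, u i * v i
  -- `t ↦ D t² + 2 E t + (b² - ∑ v²) = (a t + b)² - ∑ (u t - v)²` is `≤ 0` at `t = -b / a`,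
  -- so its discriminant is nonnegative.
  set t := -b / a
  have hat : a * t + b = 0 := by simp only [t]; field_simp; ring
  have hexpand : ∑ i ∈ s, (u i * t - v i) ^ 2
      = t ^ 2 * ∑ i ∈ s, u i ^ 2 - 2 * t * ∑ i ∈ s, u i * v i + ∑ i ∈ s, v i ^ 2 := by
    simp only [sub_sq, sum_add_distrib, sum_sub_distrib, mul_sum]
    congr 1; congr 1
    all_goals exact sum_congr rfl fun i _ => by ring
  have hdisc : E ^ 2 - D * (b ^ 2 - ∑ i ∈ s, v i ^ 2)
      = (D * t + E) ^ 2 + D * ∑ i ∈ s, (u i * t - v i) ^ 2 := by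
    rw [hexpand]
    linear_combination (-D * (a * t + b)) * hat
  have hD : 0 ≤ D := sub_nonneg.2 hu.le
  have : 0 ≤ (D * t + E) ^ 2 + D * ∑ i ∈ s, (u i * t - v i) ^ 2 := by positivity
  linarith

section

variable {n : Type*} [Fintype n]

theorem Matrix.sum_mul_mul_mul_mul_eq_trace (G H A B : Matrix n n ℝ) :
    ∑ μ, ∑ ν, ∑ ρ, ∑ σ, G μ ρ * H ν σ * A μ ν * B ρ σ = trace (Aᵀ * G * B * Hᵀ) := by
  simp only [trace, Matrix.diag, mul_apply, transpose_apply, sum_mul]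
  rw [sum_comm]
  refine sum_congr rfl fun ν _ => ?_
  rw [sum_comm_cycle]
  refine sum_congr rfl fun σ _ => ?_
  rw [sum_comm]
  exact sum_congr rfl fun ρ _ => sum_congr rfl fun μ _ => by ring

theorem Matrix.PosSemidef.trace_transpose_mul_mul_mul_nonneg {P : Matrix n n ℝ}
    (hP : P.PosSemidef) (T : Matrix n n ℝ) : 0 ≤ trace (Tᵀ * P * T * P) := by
  have h := (hP.kronecker hP).dotProduct_mulVec_nonneg (vec T)
  have hPt : Pᵀ = P := by rw [← conjTranspose_eq_transpose_of_trivial]; exact hP.isHermitian.eq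
  rwa [star_trivial, kronecker_mulVec_vec, vec_dotProduct_vec, hPt, ← Matrix.mul_assoc,
    ← Matrix.mul_assoc] at h

theorem Matrix.trace_transpose_mul_add_smul_vecMulVec {R : Type*} [CommRing R]
    (G T : Matrix n n R) (c : R) {X : n → R} (hL : X ᵥ* T = 0) (hR : T *ᵥ X = 0) :
    trace (Tᵀ * (G + c • vecMulVec X X) * T * (G + c • vecMulVec X X))
      = trace (Tᵀ * G * T * G) := by
  have h₁ : T * vecMulVec X X = 0 := by rw [mul_vecMulVec, hR]; simp
  have h₂ : Tᵀ * vecMulVec X X = 0 := by rw [mul_vecMulVec, mulVec_transpose, hL]; simp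
  simp [Matrix.mul_add, Matrix.mul_assoc, h₁, h₂]

theorem sum_sum_eq_zero_of_antisymm {f : n → n → ℝ} (hf : ∀ i j, f i j = -f j i) :
    ∑ i, ∑ j, f i j = 0 := by
  have h : ∑ i, ∑ j, f i j = -∑ i, ∑ j, f i j := by
    conv_rhs => rw [sum_comm]
    simp only [← sum_neg_distrib, ← hf]
  linarith

def electricPart (V : n → n → n → n → ℝ) (X : n → ℝ) : Matrix n n ℝ :=
  of fun μ ν => ∑ α, ∑ β, V α μ β ν * X α * X β

theorem electricPart_eq_sum (V : n → n → n → n → ℝ) (X : n → ℝ) :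
    electricPart V X = ∑ α, ∑ β, (X α * X β) • of fun μ ν => V α μ β ν := by
  ext μ ν
  simp only [electricPart, of_apply, Matrix.sum_apply, Matrix.smul_apply, smul_eq_mul]
  exact sum_congr rfl fun α _ => sum_congr rfl fun β _ => by ring

theorem vecMul_electricPart {V : n → n → n → n → ℝ} (hV : ∀ α μ β ν, V α μ β ν = -V μ α β ν)
    (X : n → ℝ) : X ᵥ* electricPart V X = 0 := by
  ext ν
  simp only [vecMul, dotProduct, electricPart, of_apply, mul_sum, Pi.zero_apply]
  refine sum_sum_eq_zero_of_antisymm fun μ α => ?_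
  rw [← sum_neg_distrib]
  exact sum_congr rfl fun β _ => by rw [hV]; ring

theorem electricPart_mulVec {V : n → n → n → n → ℝ} (hV : ∀ α μ β ν, V α μ β ν = -V α μ ν β)
    (X : n → ℝ) : electricPart V X *ᵥ X = 0 := by
  ext μ
  simp only [mulVec, dotProduct, electricPart, of_apply, sum_mul, Pi.zero_apply]
  rw [sum_comm]
  refine sum_eq_zero fun α _ => sum_sum_eq_zero_of_antisymm fun ν β => ?_
  rw [hV]; ring

theorem sum_contract_mul_eq_trace_electricPart (G H : Matrix n n ℝ) (V : n → n → n → n → ℝ)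
    (X : n → ℝ) :
    ∑ α, ∑ β, ∑ γ, ∑ δ,
      (∑ μ, ∑ ν, ∑ ρ, ∑ σ, G μ ρ * H ν σ * (V α μ β ν * V γ ρ δ σ)) * X α * X β * X γ * X δ
      = trace ((electricPart V X)ᵀ * G * electricPart V X * Hᵀ) := by
  simp only [electricPart_eq_sum, transpose_sum, Matrix.sum_mul, trace_sum]
  simp only [Matrix.mul_sum, Matrix.sum_mul, trace_sum, transpose_smul, Matrix.smul_mul,
    Matrix.mul_smul, trace_smul, ← sum_mul_mul_mul_mul_eq_trace, smul_eq_mul, of_apply]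
  refine sum_congr rfl fun α _ => sum_congr rfl fun β _ => sum_congr rfl fun γ _ =>
    sum_congr rfl fun δ _ => ?_
  simp only [sum_mul, mul_sum]
  refine sum_congr rfl fun μ _ => sum_congr rfl fun ν _ => sum_congr rfl fun ρ _ =>
    sum_congr rfl fun σ _ => by ring

end

noncomputable def minkowskiMatrix : Matrix (Fin 4) (Fin 4) ℝ := of eta

theorem minkowskiMatrix_transpose : minkowskiMatrixᵀ = minkowskiMatrix := by
  ext μ ν
  by_cases h : μ = ν
  · subst h; rfl
  · simp [minkowskiMatrix, eta, h, Ne.symm h]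

theorem sum_sum_eta_mul_mul (x y : Fin 4 → ℝ) :
    ∑ μ, ∑ ν, eta μ ν * x μ * y ν = -(x 0 * y 0) + ∑ i : Fin 3, x i.succ * y i.succ := by
  simp [Fin.sum_univ_succ, eta, Fin.succ_ne_zero]

theorem dotProduct_minkowskiMatrix_mulVec (x y : Fin 4 → ℝ) :
    x ⬝ᵥ (minkowskiMatrix *ᵥ y) = ∑ μ, ∑ ν, eta μ ν * x μ * y ν := by
  simp only [dotProduct, mulVec, minkowskiMatrix, of_apply, mul_sum]
  exact sum_congr rfl fun μ _ => sum_congr rfl fun ν _ => by ring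

-- `x` plays the role of a covector, paired with the vector `X` by `X ⬝ᵥ x`; numerically `η` is
-- its own inverse, so `∑ eta μ ν * x μ * x ν` is `η^{μν} x_μ x_ν`.
theorem sum_eta_mul_sum_eta_le_sq_dotProduct {X : Fin 4 → ℝ}
    (hX : ∑ μ, ∑ ν, eta μ ν * X μ * X ν < 0) (x : Fin 4 → ℝ) :
    (∑ μ, ∑ ν, eta μ ν * X μ * X ν) * (∑ μ, ∑ ν, eta μ ν * x μ * x ν) ≤ (X ⬝ᵥ x) ^ 2 := by
  rw [sum_sum_eta_mul_mul] at hX ⊢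
  have h := Finset.sub_sum_sq_mul_sub_sum_sq_le univ (X 0) (x 0) (fun i : Fin 3 => X i.succ)
    (fun i => x i.succ) (by simpa [sq] using hX)
  rw [sum_sum_eta_mul_mul,
    show X ⬝ᵥ x = X 0 * x 0 + ∑ i : Fin 3, X i.succ * x i.succ from Fin.sum_univ_succ _]
  simp only [sq] at h ⊢
  linarith

theorem posSemidef_minkowskiMatrix_add_smul_vecMulVec {X : Fin 4 → ℝ}
    (hX : ∑ μ, ∑ ν, eta μ ν * X μ * X ν < 0) :
    (minkowskiMatrix + (-∑ μ, ∑ ν, eta μ ν * X μ * X ν)⁻¹ • vecMulVec X X).PosSemidef := by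
  set q := -∑ μ, ∑ ν, eta μ ν * X μ * X ν
  have hq : 0 < q := neg_pos.2 hX
  refine posSemidef_iff_dotProduct_mulVec.2 ⟨?_, fun x => ?_⟩
  · simp [IsHermitian, conjTranspose_eq_transpose_of_trivial, transpose_add, transpose_smul,
      minkowskiMatrix_transpose, transpose_vecMulVec]
  · have h := sum_eta_mul_sum_eta_le_sq_dotProduct hX x
    simp only [star_trivial, add_mulVec, dotProduct_add, smul_mulVec, dotProduct_smul,
      vecMulVec_mulVec, dotProduct_minkowskiMatrix_mulVec, op_smul_eq_smul, dotProduct_comm x X,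
      smul_eq_mul]
    calc 0 ≤ q⁻¹ * (q * (∑ μ, ∑ ν, eta μ ν * x μ * x ν) + (X ⬝ᵥ x) * (X ⬝ᵥ x)) := by
          have : 0 ≤ q * (∑ μ, ∑ ν, eta μ ν * x μ * x ν) + (X ⬝ᵥ x) * (X ⬝ᵥ x) := by
            simp only [q, neg_mul, ← sq]; linarith
          positivity
      _ = _ := by rw [mul_add, inv_mul_cancel_left₀ hq.ne']

theorem trace_transpose_mul_minkowskiMatrix_nonneg {X : Fin 4 → ℝ}
    (hX : ∑ μ, ∑ ν, eta μ ν * X μ * X ν < 0) {T : Matrix (Fin 4) (Fin 4) ℝ}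
    (hL : X ᵥ* T = 0) (hR : T *ᵥ X = 0) :
    0 ≤ trace (Tᵀ * minkowskiMatrix * T * minkowskiMatrix) := by
  rw [← trace_transpose_mul_add_smul_vecMulVec _ _ _ hL hR]
  exact (posSemidef_minkowskiMatrix_add_smul_vecMulVec hX).trace_transpose_mul_mul_mul_nonneg T

theorem hodge_antisymm_left (W : Fin 4 → Fin 4 → Fin 4 → Fin 4 → ℝ) (α β γ δ : Fin 4) :
    hodge W α β γ δ = -hodge W β α γ δ := by
  have h (a b c d : Fin 4) : eps4 a b c d = -eps4 b a c d := by unfold eps4; ring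
  simp only [hodge, h α β, mul_neg, neg_mul, sum_neg_distrib]

theorem hodge_antisymm_right {W : Fin 4 → Fin 4 → Fin 4 → Fin 4 → ℝ}
    (hW : ∀ α β γ δ, W α β γ δ = -W α β δ γ) (α β γ δ : Fin 4) :
    hodge W α β γ δ = -hodge W α β δ γ := by
  simp only [hodge, hW _ _ γ δ, mul_neg, sum_neg_distrib]

theorem sum_belRobinson_mul_eq_trace_electricPart (W : Fin 4 → Fin 4 → Fin 4 → Fin 4 → ℝ)
    (X : Fin 4 → ℝ) :
    ∑ α, ∑ β, ∑ γ, ∑ δ, belRobinson W α β γ δ * X α * X β * X γ * X δ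
      = trace ((electricPart W X)ᵀ * minkowskiMatrix * electricPart W X * minkowskiMatrix)
        + trace ((electricPart (hodge W) X)ᵀ * minkowskiMatrix * electricPart (hodge W) X
            * minkowskiMatrix) := by
  have hE := sum_contract_mul_eq_trace_electricPart minkowskiMatrix minkowskiMatrix W X
  have hB := sum_contract_mul_eq_trace_electricPart minkowskiMatrix minkowskiMatrix (hodge W) X
  rw [minkowskiMatrix_transpose] at hE hB
  rw [← hE, ← hB]
  simp only [belRobinson, minkowskiMatrix, of_apply, mul_add, add_mul, sum_add_distrib]

theorem belRobinson_positivity_general (W : Fin 4 → Fin 4 → Fin 4 → Fin 4 → ℝ)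
    (hW : IsWeylTensor W) (X : Fin 4 → ℝ)
    (hTimelike : ∑ μ, ∑ ν, eta μ ν * X μ * X ν < 0) :
    0 ≤ ∑ α, ∑ β, ∑ γ, ∑ δ, belRobinson W α β γ δ * X α * X β * X γ * X δ := by
  obtain ⟨hW₁, hW₂, -⟩ := hW
  rw [sum_belRobinson_mul_eq_trace_electricPart]
  exact add_nonneg
    (trace_transpose_mul_minkowskiMatrix_nonneg hTimelike (vecMul_electricPart hW₁ X)
      (electricPart_mulVec hW₂ X))
    (trace_transpose_mul_minkowskiMatrix_nonneg hTimelike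
      (vecMul_electricPart (hodge_antisymm_left W) X)
      (electricPart_mulVec (hodge_antisymm_right hW₂) X))

/-- For every future-directed timelike vector `X`, the Bel-Robinson tensor of a Weyl
tensor satisfies `Q(X,X,X,X) ≥ 0`. -/
theorem belRobinson_positivity (W : Fin 4 → Fin 4 → Fin 4 → Fin 4 → ℝ)
    (hW : IsWeylTensor W) (X : Fin 4 → ℝ)
    (hTimelike : ∑ μ, ∑ ν, eta μ ν * X μ * X ν < 0) (hFuture : 0 < X 0) :
    0 ≤ ∑ α, ∑ β, ∑ γ, ∑ δ, belRobinson W α β γ δ * X α * X β * X γ * X δ :=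
  belRobinson_positivity_general W hW X hTimelike
end

section
/- For every Weyl tensor W on (ℝ⁴, η), the double Hodge dual satisfies *(*W) = -W, i.e. (*(*W))_{αβγδ} = -W_{αβγδ} for all indices α, β, γ, δ ∈ {0,1,2,3}. -/
noncomputable def dual1 (X : Fin 4 → Fin 4 → ℝ) (α β : Fin 4) : ℝ :=
  (1 / 2) * ∑ μ, ∑ ν, ∑ ρ, ∑ σ, eta ρ μ * eta σ ν * eps4 α β ρ σ * X μ ν

lemma fv0 : ((0:Fin 4):ℕ) = 0 := rfl
lemma fv1 : ((1:Fin 4):ℕ) = 1 := rfl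
lemma fv2 : ((2:Fin 4):ℕ) = 2 := rfl
lemma fv3 : ((3:Fin 4):ℕ) = 3 := rfl
lemma fne01 : (((0:Fin 4) = (1:Fin 4))) = False := by decide
lemma fne02 : (((0:Fin 4) = (2:Fin 4))) = False := by decide
lemma fne03 : (((0:Fin 4) = (3:Fin 4))) = False := by decide
lemma fne10 : (((1:Fin 4) = (0:Fin 4))) = False := by decide
lemma fne12 : (((1:Fin 4) = (2:Fin 4))) = False := by decide
lemma fne13 : (((1:Fin 4) = (3:Fin 4))) = False := by decide
lemma fne20 : (((2:Fin 4) = (0:Fin 4))) = False := by decide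
lemma fne21 : (((2:Fin 4) = (1:Fin 4))) = False := by decide
lemma fne23 : (((2:Fin 4) = (3:Fin 4))) = False := by decide
lemma fne30 : (((3:Fin 4) = (0:Fin 4))) = False := by decide
lemma fne31 : (((3:Fin 4) = (1:Fin 4))) = False := by decide
lemma fne32 : (((3:Fin 4) = (2:Fin 4))) = False := by decide

lemma dual1_00 (X : Fin 4 → Fin 4 → ℝ) : dual1 X 0 0 = 0 := by
  simp only [dual1, Fin.sum_univ_four, eta, eps4, fv0, fv1, fv2, fv3,
    fne01, fne02, fne03, fne10, fne12, fne13, fne20, fne21, fne23, fne30, fne31, fne32, if_true, if_false, ite_true, ite_false, eq_self_iff_true, if_neg, if_pos]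
  norm_num
  try ring

lemma dual1_01 (X : Fin 4 → Fin 4 → ℝ) : dual1 X 0 1 = (X 2 3 + -X 3 2)/2 := by
  simp only [dual1, Fin.sum_univ_four, eta, eps4, fv0, fv1, fv2, fv3,
    fne01, fne02, fne03, fne10, fne12, fne13, fne20, fne21, fne23, fne30, fne31, fne32, if_true, if_false, ite_true, ite_false, eq_self_iff_true, if_neg, if_pos]
  norm_num
  try ring

lemma dual1_02 (X : Fin 4 → Fin 4 → ℝ) : dual1 X 0 2 = (-X 1 3 + X 3 1)/2 := by
  simp only [dual1, Fin.sum_univ_four, eta, eps4, fv0, fv1, fv2, fv3,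
    fne01, fne02, fne03, fne10, fne12, fne13, fne20, fne21, fne23, fne30, fne31, fne32, if_true, if_false, ite_true, ite_false, eq_self_iff_true, if_neg, if_pos]
  norm_num
  try ring

lemma dual1_03 (X : Fin 4 → Fin 4 → ℝ) : dual1 X 0 3 = (X 1 2 + -X 2 1)/2 := by
  simp only [dual1, Fin.sum_univ_four, eta, eps4, fv0, fv1, fv2, fv3,
    fne01, fne02, fne03, fne10, fne12, fne13, fne20, fne21, fne23, fne30, fne31, fne32, if_true, if_false, ite_true, ite_false, eq_self_iff_true, if_neg, if_pos]
  norm_num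
  try ring

lemma dual1_10 (X : Fin 4 → Fin 4 → ℝ) : dual1 X 1 0 = (-X 2 3 + X 3 2)/2 := by
  simp only [dual1, Fin.sum_univ_four, eta, eps4, fv0, fv1, fv2, fv3,
    fne01, fne02, fne03, fne10, fne12, fne13, fne20, fne21, fne23, fne30, fne31, fne32, if_true, if_false, ite_true, ite_false, eq_self_iff_true, if_neg, if_pos]
  norm_num
  try ring

lemma dual1_11 (X : Fin 4 → Fin 4 → ℝ) : dual1 X 1 1 = 0 := by
  simp only [dual1, Fin.sum_univ_four, eta, eps4, fv0, fv1, fv2, fv3,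
    fne01, fne02, fne03, fne10, fne12, fne13, fne20, fne21, fne23, fne30, fne31, fne32, if_true, if_false, ite_true, ite_false, eq_self_iff_true, if_neg, if_pos]
  norm_num
  try ring

lemma dual1_12 (X : Fin 4 → Fin 4 → ℝ) : dual1 X 1 2 = (-X 0 3 + X 3 0)/2 := by
  simp only [dual1, Fin.sum_univ_four, eta, eps4, fv0, fv1, fv2, fv3,
    fne01, fne02, fne03, fne10, fne12, fne13, fne20, fne21, fne23, fne30, fne31, fne32, if_true, if_false, ite_true, ite_false, eq_self_iff_true, if_neg, if_pos]
  norm_num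
  try ring

lemma dual1_13 (X : Fin 4 → Fin 4 → ℝ) : dual1 X 1 3 = (X 0 2 + -X 2 0)/2 := by
  simp only [dual1, Fin.sum_univ_four, eta, eps4, fv0, fv1, fv2, fv3,
    fne01, fne02, fne03, fne10, fne12, fne13, fne20, fne21, fne23, fne30, fne31, fne32, if_true, if_false, ite_true, ite_false, eq_self_iff_true, if_neg, if_pos]
  norm_num
  try ring

lemma dual1_20 (X : Fin 4 → Fin 4 → ℝ) : dual1 X 2 0 = (X 1 3 + -X 3 1)/2 := by
  simp only [dual1, Fin.sum_univ_four, eta, eps4, fv0, fv1, fv2, fv3,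
    fne01, fne02, fne03, fne10, fne12, fne13, fne20, fne21, fne23, fne30, fne31, fne32, if_true, if_false, ite_true, ite_false, eq_self_iff_true, if_neg, if_pos]
  norm_num
  try ring

lemma dual1_21 (X : Fin 4 → Fin 4 → ℝ) : dual1 X 2 1 = (X 0 3 + -X 3 0)/2 := by
  simp only [dual1, Fin.sum_univ_four, eta, eps4, fv0, fv1, fv2, fv3,
    fne01, fne02, fne03, fne10, fne12, fne13, fne20, fne21, fne23, fne30, fne31, fne32, if_true, if_false, ite_true, ite_false, eq_self_iff_true, if_neg, if_pos]
  norm_num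
  try ring

lemma dual1_22 (X : Fin 4 → Fin 4 → ℝ) : dual1 X 2 2 = 0 := by
  simp only [dual1, Fin.sum_univ_four, eta, eps4, fv0, fv1, fv2, fv3,
    fne01, fne02, fne03, fne10, fne12, fne13, fne20, fne21, fne23, fne30, fne31, fne32, if_true, if_false, ite_true, ite_false, eq_self_iff_true, if_neg, if_pos]
  norm_num
  try ring

lemma dual1_23 (X : Fin 4 → Fin 4 → ℝ) : dual1 X 2 3 = (-X 0 1 + X 1 0)/2 := by
  simp only [dual1, Fin.sum_univ_four, eta, eps4, fv0, fv1, fv2, fv3,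
    fne01, fne02, fne03, fne10, fne12, fne13, fne20, fne21, fne23, fne30, fne31, fne32, if_true, if_false, ite_true, ite_false, eq_self_iff_true, if_neg, if_pos]
  norm_num
  try ring

lemma dual1_30 (X : Fin 4 → Fin 4 → ℝ) : dual1 X 3 0 = (-X 1 2 + X 2 1)/2 := by
  simp only [dual1, Fin.sum_univ_four, eta, eps4, fv0, fv1, fv2, fv3,
    fne01, fne02, fne03, fne10, fne12, fne13, fne20, fne21, fne23, fne30, fne31, fne32, if_true, if_false, ite_true, ite_false, eq_self_iff_true, if_neg, if_pos]
  norm_num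
  try ring

lemma dual1_31 (X : Fin 4 → Fin 4 → ℝ) : dual1 X 3 1 = (-X 0 2 + X 2 0)/2 := by
  simp only [dual1, Fin.sum_univ_four, eta, eps4, fv0, fv1, fv2, fv3,
    fne01, fne02, fne03, fne10, fne12, fne13, fne20, fne21, fne23, fne30, fne31, fne32, if_true, if_false, ite_true, ite_false, eq_self_iff_true, if_neg, if_pos]
  norm_num
  try ring

lemma dual1_32 (X : Fin 4 → Fin 4 → ℝ) : dual1 X 3 2 = (X 0 1 + -X 1 0)/2 := by
  simp only [dual1, Fin.sum_univ_four, eta, eps4, fv0, fv1, fv2, fv3,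
    fne01, fne02, fne03, fne10, fne12, fne13, fne20, fne21, fne23, fne30, fne31, fne32, if_true, if_false, ite_true, ite_false, eq_self_iff_true, if_neg, if_pos]
  norm_num
  try ring

lemma dual1_33 (X : Fin 4 → Fin 4 → ℝ) : dual1 X 3 3 = 0 := by
  simp only [dual1, Fin.sum_univ_four, eta, eps4, fv0, fv1, fv2, fv3,
    fne01, fne02, fne03, fne10, fne12, fne13, fne20, fne21, fne23, fne30, fne31, fne32, if_true, if_false, ite_true, ite_false, eq_self_iff_true, if_neg, if_pos]
  norm_num
  try ring

lemma dd (X : Fin 4 → Fin 4 → ℝ) (hX : ∀ a b, X a b = -X b a) (α β : Fin 4) :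
    dual1 (dual1 X) α β = -X α β := by
  have h4 : ∀ (i : Fin 4), i = 0 ∨ i = 1 ∨ i = 2 ∨ i = 3 := by decide
  rcases h4 α with rfl|rfl|rfl|rfl <;> rcases h4 β with rfl|rfl|rfl|rfl <;>
    simp only [dual1_00, dual1_01, dual1_02, dual1_03, dual1_10, dual1_11, dual1_12, dual1_13, dual1_20, dual1_21, dual1_22, dual1_23, dual1_30, dual1_31, dual1_32, dual1_33] <;>
    linarith [hX 0 0, hX 1 1, hX 2 2, hX 3 3, hX 0 1, hX 0 2, hX 0 3, hX 1 2, hX 1 3, hX 2 3]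

/-- The double Hodge dual of a Weyl tensor satisfies `*(*W) = -W`. -/
theorem hodge_hodge (W : Fin 4 → Fin 4 → Fin 4 → Fin 4 → ℝ)
    (hW : IsWeylTensor W) (α β γ δ : Fin 4) :
    hodge (hodge W) α β γ δ = -W α β γ δ := by
  exact dd (fun a b => W a b γ δ) (fun a b => hW.1 a b γ δ) α β
end
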